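/- Let k ≥ 2, 1 ≤ j ≤ k and p ∈ (0,1). There exists a constant γ ≥ 1, depending only on j, k and p but not on L, such that for every L ≥ 1 and every f : {0,1}^{T_L} → ℝ on the ball T_L of radius L centered at r in the (k+1)-regular tree, the two-block Poincaré inequality Var_μ(f) ≤ γ · ( μ( c_r · Var_r(f) ) + μ( Var_B(f) ) ) holds, where c_r(η) = 1 if and only if at least j of the k+1 neighbors y of r satisfy η_y = 0, B = T_L \ {r}, Var_r(f) is the conditional variance of f in the coordinate η_r given all other coordinates, and Var_B(f) is the conditional variance of f in the coordinates of B given η_r. -/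

import Mathlib

open scoped Classical

noncomputable section

section Bernoulli

variable {V : Type*} [Fintype V] [DecidableEq V]

/-- Bernoulli(p) product weight of a configuration (`true` = occupied, with probability `p`). -/
def wt (p : ℝ) (η : V → Bool) : ℝ := ∏ x : V, if η x then p else 1 - p

/-- Expectation under the Bernoulli(p) product measure μ. -/
def mean (p : ℝ) (f : (V → Bool) → ℝ) : ℝ := ∑ η : V → Bool, wt p η * f η

/-- Probability of an event under the Bernoulli(p) product measure μ. -/
def probEv (p : ℝ) (E : (V → Bool) → Prop) : ℝ := mean p (fun η => if E η then 1 else 0)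

/-- Conditional expectation `μ_A(f)` of `f` given the coordinates outside `A`. -/
def cexp (p : ℝ) (A : Finset V) (f : (V → Bool) → ℝ) (η : V → Bool) : ℝ :=
  ∑ ζ : V → Bool,
    (∏ x : V, if x ∈ A then (if ζ x then p else 1 - p) else (if ζ x = η x then 1 else 0)) * f ζ

/-- Conditional variance `Var_A(f)` on the coordinates of `A` given the remaining coordinates. -/
def cvar (p : ℝ) (A : Finset V) (f : (V → Bool) → ℝ) (η : V → Bool) : ℝ :=
  cexp p A (fun ζ => f ζ ^ 2) η - (cexp p A f η) ^ 2

/-- Variance `Var_μ(f)` under the Bernoulli(p) product measure. -/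
def varTot (p : ℝ) (f : (V → Bool) → ℝ) : ℝ := mean p (fun η => f η ^ 2) - (mean p f) ^ 2

end Bernoulli

/-- Vertices of the ball `T_L` of radius `L` centered at `r` in the `(k+1)`-regular tree:
the root (`none`) together with the words `v₁⋯v_{m+1}`, `m + 1 ≤ L`, where `v₁ ∈ Fin (k+1)`
and the subsequent letters lie in `Fin k`. -/
abbrev BV (k L : ℕ) := Option (Σ m : Fin L, Fin (k + 1) × (Fin m.val → Fin k))

/-- Depth (distance from the root `r`). -/
def bdepth {k L : ℕ} : BV k L → ℕ
  | none => 0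
  | some ⟨m, _, _⟩ => m.val + 1

/-- `y` is a one-letter extension of `x`. -/
def oneStep {k L : ℕ} : BV k L → BV k L → Prop
  | none, some ⟨m, _, _⟩ => m.val = 0
  | some ⟨m, a, w⟩, some ⟨m', b, w'⟩ =>
      a = b ∧ ∃ h : m'.val = m.val + 1, ∀ i : Fin m.val, w' (Fin.cast h.symm i.castSucc) = w i
  | _, _ => False

/-- Adjacency in the ball `T_L`: one of the two words is a one-letter extension of the other. -/
def adj {k L : ℕ} (x y : BV k L) : Prop := oneStep x y ∨ oneStep y x

/-! Let `f_b` be `f` with `η_r` set to `b`. The law of total variance at the root gives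
`Var f = μ(Var_B f) + p(1-p)(μ f₁ - μ f₀)²`, where `μ(Var_B f) = p Var f₁ + (1-p) Var f₀` and
`μ(c_r Var_r f) = p(1-p) μ(c_r (f₁ - f₀)²)`. Pointwise
`μ f₁ - μ f₀ = (f₁ - f₀) - (f₁ - μ f₁) + (f₀ - μ f₀)`; squaring, multiplying by `c_r ∈ [0,1]` and
averaging bounds `μ(c_r) (μ f₁ - μ f₀)²` by `3 (μ(c_r (f₁ - f₀)²) + Var f₁ + Var f₀)`. Since `c_r`
dominates the event that all `k + 1` neighbours of `r` are empty, `μ(c_r) ≥ (1-p)^(k+1)`, and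
`γ = 1 + 3 / (1-p)^(k+1)` works. -/

open Finset Function

section BernoulliProduct

variable {V : Type*} [DecidableEq V]

theorem update_funSplitAt_symm (r : V) (b b' : Bool) (g : {x // x ≠ r} → Bool) :
    update ((Equiv.funSplitAt r Bool).symm (b', g)) r b
      = (Equiv.funSplitAt r Bool).symm (b, g) := by
  funext x
  by_cases hx : x = r <;> simp [Equiv.funSplitAt_symm_apply, hx]

theorem funSplitAt_symm_restrict (r : V) (b : Bool) (η : V → Bool) :
    (Equiv.funSplitAt r Bool).symm (b, fun x => η x) = update η r b := by
  funext x
  by_cases hx : x = r <;> simp [Equiv.funSplitAt_symm_apply, hx]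

variable [Fintype V] {p : ℝ}

theorem mean_prod (g : V → Bool → ℝ) :
    mean p (fun η => ∏ x, g x (η x)) = ∏ x, (p * g x true + (1 - p) * g x false) := by
  simp only [mean, wt, ← prod_mul_distrib]
  rw [← Fintype.prod_sum (fun x b => (if b then p else 1 - p) * g x b)]
  simp

theorem sum_wt : ∑ η : V → Bool, wt p η = 1 := by
  simpa [mean] using mean_prod (V := V) (p := p) fun _ _ => 1

theorem mean_const (a : ℝ) : mean p (fun _ : V → Bool => a) = a := by
  rw [mean, ← sum_mul, sum_wt, one_mul]

theorem mean_add (u v : (V → Bool) → ℝ) :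
    mean p (fun η => u η + v η) = mean p u + mean p v := by
  simp only [mean, mul_add, sum_add_distrib]

theorem mean_const_mul (a : ℝ) (u : (V → Bool) → ℝ) :
    mean p (fun η => a * u η) = a * mean p u := by
  simp only [mean, mul_sum, mul_left_comm]

theorem mean_mono (hp0 : 0 ≤ p) (hp1 : p ≤ 1) {u v : (V → Bool) → ℝ} (h : ∀ η, u η ≤ v η) :
    mean p u ≤ mean p v :=
  sum_le_sum fun η _ => mul_le_mul_of_nonneg_left (h η) <|
    prod_nonneg fun x _ => by split_ifs <;> linarith

theorem mean_nonneg (hp0 : 0 ≤ p) (hp1 : p ≤ 1) {u : (V → Bool) → ℝ} (h : ∀ η, 0 ≤ u η) :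
    0 ≤ mean p u := by
  simpa only [mean_const] using mean_mono hp0 hp1 (u := fun _ => 0) h

theorem varTot_eq_mean_sq_sub (f : (V → Bool) → ℝ) :
    varTot p f = mean p (fun η => (f η - mean p f) ^ 2) := by
  have h : ∀ η, (f η - mean p f) ^ 2 = f η ^ 2 + (-2 * mean p f * f η + mean p f ^ 2) :=
    fun η => by ring
  simp only [h, mean_add, mean_const_mul, mean_const, varTot]
  ring

theorem varTot_nonneg (hp0 : 0 ≤ p) (hp1 : p ≤ 1) (f : (V → Bool) → ℝ) : 0 ≤ varTot p f := by
  rw [varTot_eq_mean_sq_sub]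
  exact mean_nonneg hp0 hp1 fun η => sq_nonneg _

theorem probEv_forall_eq_false (S : Finset V) :
    probEv p (fun η => ∀ x ∈ S, η x = false) = (1 - p) ^ #S := by
  unfold probEv
  convert mean_prod (p := p) fun x b => if x ∈ S then (if b = false then (1 : ℝ) else 0) else 1
    using 1
  · congr 1
    funext η
    rw [prod_ite_mem, univ_inter, prod_boole]
    congr
  · calc (1 - p) ^ #S = ∏ x, if x ∈ S then 1 - p else 1 := by
          rw [prod_ite_mem, univ_inter, prod_const]
      _ = _ := prod_congr rfl fun x _ => by by_cases hx : x ∈ S <;> simp [hx]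

theorem sum_prod_mul_eq_sum_funSplitAt (r : V) (F : V → Bool → ℝ) (G : (V → Bool) → ℝ) :
    ∑ ζ : V → Bool, (∏ x, F x (ζ x)) * G ζ
      = ∑ b, F r b * ∑ g : {x // x ≠ r} → Bool,
          (∏ x : {x // x ≠ r}, F x (g x)) * G ((Equiv.funSplitAt r Bool).symm (b, g)) := by
  rw [← (Equiv.funSplitAt r Bool).symm.sum_comp, Fintype.sum_prod_type]
  refine sum_congr rfl fun b _ => ?_
  rw [mul_sum]
  refine sum_congr rfl fun g _ => ?_
  rw [Fintype.prod_eq_mul_prod_subtype_ne _ r]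
  simp [Equiv.funSplitAt_symm_apply, mul_assoc, fun x : {x // x ≠ r} => x.2]

theorem mean_update (r : V) (S : (V → Bool) → ℝ) (b : Bool) :
    mean p (fun η => S (update η r b))
      = ∑ g : {x // x ≠ r} → Bool,
          (∏ x, if g x then p else 1 - p) * S ((Equiv.funSplitAt r Bool).symm (b, g)) := by
  simp only [mean, wt]
  rw [sum_prod_mul_eq_sum_funSplitAt r (fun _ t => if t then p else 1 - p)]
  simp [update_funSplitAt_symm, ← add_mul]

theorem mean_eq_update (r : V) (S : (V → Bool) → ℝ) :
    mean p S = p * mean p (fun η => S (update η r true))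
      + (1 - p) * mean p (fun η => S (update η r false)) := by
  rw [mean_update, mean_update]
  simp only [mean, wt]
  rw [sum_prod_mul_eq_sum_funSplitAt r (fun _ t => if t then p else 1 - p)]
  simp

end BernoulliProduct

section ConditionalVariance

variable {V : Type*} [Fintype V] [DecidableEq V] {p : ℝ}

theorem cexp_erase (r : V) (f : (V → Bool) → ℝ) (η : V → Bool) :
    cexp p (univ.erase r) f η = mean p (fun ζ => f (update ζ r (η r))) := by
  rw [mean_update, cexp, sum_prod_mul_eq_sum_funSplitAt r
    (fun x t => if x ∈ univ.erase r then (if t then p else 1 - p) else if t = η x then 1 else 0)]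
  simp [fun x : {x // x ≠ r} => x.2]

theorem cexp_singleton (r : V) (f : (V → Bool) → ℝ) (η : V → Bool) :
    cexp p {r} f η = p * f (update η r true) + (1 - p) * f (update η r false) := by
  rw [cexp, sum_prod_mul_eq_sum_funSplitAt r
    (fun x t => if x ∈ ({r} : Finset V) then (if t then p else 1 - p)
      else if t = η x then 1 else 0)]
  have hpoint : ∀ b, ∑ g, (∏ x : {x // x ≠ r}, if g x = η x then (1 : ℝ) else 0)
      * f ((Equiv.funSplitAt r Bool).symm (b, g)) = f (update η r b) := fun b => by
    rw [Fintype.sum_eq_single (fun x : {x // x ≠ r} => η x) fun g hg => ?_]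
    · simp [funSplitAt_symm_restrict]
    · obtain ⟨x, hx⟩ := Function.ne_iff.1 hg
      rw [prod_eq_zero (mem_univ x) (if_neg hx), zero_mul]
  simp [fun x : {x // x ≠ r} => x.2, hpoint]

theorem cvar_erase (r : V) (f : (V → Bool) → ℝ) (η : V → Bool) :
    cvar p (univ.erase r) f η = varTot p (fun ζ => f (update ζ r (η r))) := by
  rw [cvar, varTot, cexp_erase, cexp_erase]

theorem cvar_singleton (r : V) (f : (V → Bool) → ℝ) (η : V → Bool) :
    cvar p {r} f η = p * (1 - p) * (f (update η r true) - f (update η r false)) ^ 2 := by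
  rw [cvar, cexp_singleton, cexp_singleton]
  ring

end ConditionalVariance

section TwoBlock

variable {V : Type*} [Fintype V] [DecidableEq V] {p : ℝ}

theorem mean_mul_sq_sub_mean_le (hp0 : 0 ≤ p) (hp1 : p ≤ 1) {c : (V → Bool) → ℝ}
    (hc0 : ∀ η, 0 ≤ c η) (hc1 : ∀ η, c η ≤ 1) (g h : (V → Bool) → ℝ) :
    mean p c * (mean p g - mean p h) ^ 2
      ≤ 3 * (mean p (fun η => c η * (g η - h η) ^ 2) + varTot p g + varTot p h) := by
  set δ := mean p g - mean p h
  have hpt : ∀ η, δ ^ 2 * c η ≤ 3 * (c η * (g η - h η) ^ 2)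
      + (3 * (g η - mean p g) ^ 2 + 3 * (h η - mean p h) ^ 2) := fun η => by
    have hsq : δ ^ 2 ≤ 3 * ((g η - h η) ^ 2 + (g η - mean p g) ^ 2 + (h η - mean p h) ^ 2) := by
      nlinarith [sq_nonneg (g η - h η + (g η - mean p g)), sq_nonneg (g η - h η - (h η - mean p h)),
        sq_nonneg (g η - mean p g + (h η - mean p h))]
    nlinarith [mul_le_mul_of_nonneg_left hsq (hc0 η), mul_nonneg (sub_nonneg.2 (hc1 η))
      (sq_nonneg (g η - mean p g)), mul_nonneg (sub_nonneg.2 (hc1 η)) (sq_nonneg (h η - mean p h))]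
  have hmean := mean_mono hp0 hp1 hpt
  simp only [mean_add, mean_const_mul, ← varTot_eq_mean_sq_sub] at hmean
  linarith

theorem varTot_le_two_block (hp0 : 0 ≤ p) (hp1 : p ≤ 1) (r : V) {c : (V → Bool) → ℝ}
    (hc0 : ∀ η, 0 ≤ c η) (hc1 : ∀ η, c η ≤ 1) {q : ℝ} (hq : 0 < q) (hqc : q ≤ mean p c)
    (f : (V → Bool) → ℝ) :
    varTot p f ≤ (1 + 3 / q) *
      (mean p (fun η => c η * cvar p {r} f η) + mean p (cvar p (univ.erase r) f)) := by
  set f₁ := fun η => f (update η r true)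
  set f₀ := fun η => f (update η r false)
  have hblock : mean p (cvar p (univ.erase r) f) = p * varTot p f₁ + (1 - p) * varTot p f₀ := by
    simp only [mean_eq_update r (cvar p _ f), cvar_erase, update_self, mean_const, f₁, f₀]
  have hroot : mean p (fun η => c η * cvar p {r} f η)
      = p * (1 - p) * mean p (fun η => c η * (f₁ η - f₀ η) ^ 2) := by
    simp only [cvar_singleton, ← mean_const_mul, f₁, f₀]
    congr 1
    funext η
    ring
  have htotal : varTot p f = p * varTot p f₁ + (1 - p) * varTot p f₀
      + p * (1 - p) * (mean p f₁ - mean p f₀) ^ 2 := by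
    simp only [varTot, mean_eq_update r f, mean_eq_update r (fun η => f η ^ 2), f₁, f₀]
    ring
  have hδ := mean_mul_sq_sub_mean_le hp0 hp1 hc0 hc1 f₁ f₀
  rw [hroot, hblock, htotal]
  set E := mean p (fun η => c η * (f₁ η - f₀ η) ^ 2)
  set δ := mean p f₁ - mean p f₀
  have hE : 0 ≤ E := mean_nonneg hp0 hp1 fun η => mul_nonneg (hc0 η) (sq_nonneg _)
  have hV₁ := varTot_nonneg hp0 hp1 f₁
  have hV₀ := varTot_nonneg hp0 hp1 f₀
  have hp : 0 ≤ p * (1 - p) := mul_nonneg hp0 (sub_nonneg.2 hp1)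
  have hkey : p * (1 - p) * δ ^ 2
      ≤ 3 * (p * (1 - p) * E + (p * varTot p f₁ + (1 - p) * varTot p f₀)) / q := by
    rw [le_div_iff₀ hq]
    have hqδ : q * δ ^ 2 ≤ mean p c * δ ^ 2 := mul_le_mul_of_nonneg_right hqc (sq_nonneg _)
    nlinarith [mul_le_mul_of_nonneg_left (hqδ.trans hδ) hp, mul_nonneg (mul_nonneg hp0 hp0) hV₁,
      mul_nonneg (mul_nonneg (sub_nonneg.2 hp1) (sub_nonneg.2 hp1)) hV₀]
  rw [add_mul, one_mul, div_mul_eq_mul_div]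
  nlinarith [mul_nonneg hp hE]

end TwoBlock

section RootNeighbours

variable {k L : ℕ}

def rootNbrs (hL : 0 < L) : Finset (BV k L) :=
  univ.map ⟨fun a => some ⟨⟨0, hL⟩, a, Fin.elim0⟩, fun a b h => by simpa using h⟩

theorem card_rootNbrs (hL : 0 < L) : #(rootNbrs (k := k) hL) = k + 1 := by
  simp [rootNbrs]

theorem card_le_card_empty_nbrs (hL : 0 < L) {η : BV k L → Bool}
    (hη : ∀ x ∈ rootNbrs hL, η x = false) :
    k + 1 ≤ #(univ.filter fun y : BV k L => adj none y ∧ η y = false) := by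
  refine (card_rootNbrs hL).ge.trans <|
    card_le_card fun x hx => mem_filter.2 ⟨mem_univ x, ?_, hη x hx⟩
  obtain ⟨a, -, rfl⟩ := mem_map.1 hx
  exact Or.inl rfl

end RootNeighbours

theorem two_block_poincare_general (k j : ℕ) (p : ℝ) (hjk : j ≤ k)
    (hp : p ∈ Set.Ioo (0 : ℝ) 1) :
    ∃ γ : ℝ, 1 ≤ γ ∧ ∀ (L : ℕ), 1 ≤ L → ∀ f : (BV k L → Bool) → ℝ,
      varTot p f ≤ γ *
        (mean p (fun η =>
            (if j ≤ (Finset.univ.filter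
                fun y : BV k L => adj (none : BV k L) y ∧ η y = false).card
              then (1 : ℝ) else 0) * cvar p {(none : BV k L)} f η)
          + mean p (cvar p (Finset.univ.erase (none : BV k L)) f)) := by
  obtain ⟨hp0, hp1⟩ := hp
  have hq : 0 < (1 - p) ^ (k + 1) := pow_pos (sub_pos.2 hp1) _
  refine ⟨1 + 3 / (1 - p) ^ (k + 1), le_add_of_nonneg_right (by positivity), fun L hL f => ?_⟩
  refine varTot_le_two_block hp0.le hp1.le none (fun η => by split_ifs <;> norm_num)
    (fun η => by split_ifs <;> norm_num) hq ?_ f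
  calc (1 - p) ^ (k + 1) = probEv p (fun η => ∀ x ∈ rootNbrs (k := k) hL, η x = false) := by
        rw [probEv_forall_eq_false, card_rootNbrs]
    _ ≤ _ := mean_mono hp0.le hp1.le fun η => by
        split_ifs with hη hj <;> try norm_num
        exact hj ((hjk.trans k.le_succ).trans (card_le_card_empty_nbrs hL hη))

theorem two_block_poincare (k j : ℕ) (p : ℝ) (hk : 2 ≤ k) (hj1 : 1 ≤ j) (hjk : j ≤ k)
    (hp : p ∈ Set.Ioo (0 : ℝ) 1) :
    ∃ γ : ℝ, 1 ≤ γ ∧ ∀ (L : ℕ), 1 ≤ L → ∀ f : (BV k L → Bool) → ℝ,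
      varTot p f ≤ γ *
        (mean p (fun η =>
            (if j ≤ (Finset.univ.filter
                fun y : BV k L => adj (none : BV k L) y ∧ η y = false).card
              then (1 : ℝ) else 0) * cvar p {(none : BV k L)} f η)
          + mean p (cvar p (Finset.univ.erase (none : BV k L)) f)) :=
  two_block_poincare_general k j p hjk hp
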